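/- Primal ensembling reduces Bregman variance for jointly convex divergences: if D_F is jointly convex in both arguments and X_1,…,X_n are i.i.d. copies of X, then with X̂ = (1/n)∑ X_i, one has E D_F[ℰX̂ || X̂] ≤ E D_F[ℰX || X]. -/

import Mathlib

open MeasureTheory ProbabilityTheory
open scoped RealInnerProductSpace

/-!
The dual mean `m` of `Y`, defined by `∇F m = E[∇F Y]`, minimises `z ↦ E D(z, Y)`, because
`E D(z, Y) = E D(m, Y) + D(z, m)`; hence `E D(ℰX̂, X̂) ≤ E D(ℰX, X̂)`.
Joint convexity makes `D(ℰX, ·)` convex, and Jensen's inequality for the average `X̂`,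
integrated against the common law of the `Xᵢ`, gives `E D(ℰX, X̂) ≤ E D(ℰX, X)`.
-/

theorem ConvexOn.comp_prodMk_left {𝕜 E F β : Type*} [Field 𝕜] [LinearOrder 𝕜] [AddCommGroup E]
    [AddCommGroup F] [AddCommMonoid β] [PartialOrder β] [Module 𝕜 E] [Module 𝕜 F] [SMul 𝕜 β]
    {s : Set E} {t : Set F} {f : E × F → β} (hf : ConvexOn 𝕜 (s ×ˢ t) f) {y : E} (hy : y ∈ s) :
    ConvexOn 𝕜 t (fun x => f (y, x)) := by
  convert hf.comp_affineMap ((AffineMap.const 𝕜 F y).prod (AffineMap.id 𝕜 F)) using 1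
  · ext x
    simp [hy]
  · rfl

theorem ConvexOn.integral_comp_average_le_of_identDistrib {E : Type*} [NormedAddCommGroup E]
    [Module ℝ E] [MeasurableSpace E] [BorelSpace E]
    {Ω : Type*} [MeasurableSpace Ω] {μ : Measure Ω} {ι : Type*} [Fintype ι] [Nonempty ι]
    {S : Set E} {φ : E → ℝ} (hφ : ConvexOn ℝ S φ) {X : Ω → E} {Xs : ι → Ω → E}
    (hid : ∀ i, IdentDistrib (Xs i) X μ μ) (hXsS : ∀ i, ∀ᵐ ω ∂μ, Xs i ω ∈ S)
    (hφm : AEStronglyMeasurable φ (μ.map X)) (hφX : Integrable (fun ω => φ (X ω)) μ)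
    (hφavg : Integrable (fun ω => φ ((Fintype.card ι : ℝ)⁻¹ • ∑ i, Xs i ω)) μ) :
    ∫ ω, φ ((Fintype.card ι : ℝ)⁻¹ • ∑ i, Xs i ω) ∂μ ≤ ∫ ω, φ (X ω) ∂μ := by
  have hidφ : ∀ i, IdentDistrib (fun ω => φ (Xs i ω)) (fun ω => φ (X ω)) μ μ := fun i =>
    (hid i).comp_of_aemeasurable (by rw [(hid i).map_eq]; exact hφm.aemeasurable)
  have hint : ∀ i, Integrable (fun ω => φ (Xs i ω)) μ := fun i => (hidφ i).integrable_iff.2 hφX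
  have hjensen : ∀ᵐ ω ∂μ, φ ((Fintype.card ι : ℝ)⁻¹ • ∑ i, Xs i ω)
      ≤ ∑ i, (Fintype.card ι : ℝ)⁻¹ * φ (Xs i ω) := by
    filter_upwards [ae_all_iff.2 hXsS] with ω hω
    rw [Finset.smul_sum]
    exact hφ.map_sum_le (fun _ _ => by positivity) (by simp) (fun i _ => hω i)
  calc ∫ ω, φ ((Fintype.card ι : ℝ)⁻¹ • ∑ i, Xs i ω) ∂μ
      ≤ ∫ ω, ∑ i, (Fintype.card ι : ℝ)⁻¹ * φ (Xs i ω) ∂μ :=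
        integral_mono_ae hφavg (integrable_finsetSum _ fun i _ => (hint i).const_mul _) hjensen
    _ = ∫ ω, φ (X ω) ∂μ := by
        simp [integral_finsetSum _ fun i _ => (hint i).const_mul _, integral_const_mul,
          fun i => (hidφ i).integral_eq]

section Bregman

variable {E : Type*} [NormedAddCommGroup E] [InnerProductSpace ℝ E]

noncomputable def bregmanDiv (F : E → ℝ) (f' : E → E) (y x : E) : ℝ :=
  F y - F x - ⟪f' x, y - x⟫

variable [CompleteSpace E]

theorem ConvexOn.inner_le_sub_of_hasGradientAt {S : Set E} {F : E → ℝ} (hF : ConvexOn ℝ S F)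
    {G x z : E} (hx : x ∈ S) (hz : z ∈ S) (h : HasGradientAt F G x) :
    ⟪G, z - x⟫ ≤ F z - F x := by
  set ℓ : ℝ →ᵃ[ℝ] E := AffineMap.lineMap x z
  have hconv : ConvexOn ℝ (Set.Icc 0 1) (F ∘ ℓ) :=
    (hF.comp_affineMap ℓ).subset (fun t ht => hF.1.lineMap_mem hx hz ht) (convex_Icc 0 1)
  have hderiv : HasDerivAt (F ∘ ℓ) ⟪G, z - x⟫ 0 := by
    have h0 : HasFDerivAt F (InnerProductSpace.toDual ℝ E G) (ℓ 0) := by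
      simpa [ℓ] using h.hasFDerivAt
    simpa using h0.comp_hasDerivAt 0 AffineMap.hasDerivAt_lineMap
  simpa [slope, ℓ] using le_slope_of_hasDerivAt hconv (by simp) (by simp) zero_lt_one hderiv

theorem bregmanDiv_nonneg {S : Set E} {F : E → ℝ} {f' : E → E} (hF : ConvexOn ℝ S F) {x y : E}
    (hx : x ∈ S) (hy : y ∈ S) (h : HasGradientAt F (f' x) x) : 0 ≤ bregmanDiv F f' y x :=
  sub_nonneg.2 (hF.inner_le_sub_of_hasGradientAt hx hy h)

section Integral

variable {Ω : Type*} [MeasurableSpace Ω] {μ : Measure Ω} [IsProbabilityMeasure μ]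
  {F : E → ℝ} {f' : E → E} {Y : Ω → E}

theorem integral_bregmanDiv_sub_integral_bregmanDiv_of_dualMean {m z : E}
    (hm : f' m = ∫ ω, f' (Y ω) ∂μ) (hY : Integrable (fun ω => f' (Y ω)) μ)
    (hz : Integrable (fun ω => bregmanDiv F f' z (Y ω)) μ)
    (hm' : Integrable (fun ω => bregmanDiv F f' m (Y ω)) μ) :
    ∫ ω, bregmanDiv F f' z (Y ω) ∂μ - ∫ ω, bregmanDiv F f' m (Y ω) ∂μ = bregmanDiv F f' z m := by
  have hpt : ∀ ω, bregmanDiv F f' z (Y ω) - bregmanDiv F f' m (Y ω)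
      = F z - F m - ⟪z - m, f' (Y ω)⟫ := by
    intro ω
    simp only [bregmanDiv, inner_sub_right, real_inner_comm (f' (Y ω))]
    ring
  rw [← integral_sub hz hm', integral_congr_ae (.of_forall hpt), integral_sub (integrable_const _)
    (hY.const_inner _), integral_inner hY, ← hm, integral_const]
  simp [bregmanDiv, real_inner_comm]

theorem integral_bregmanDiv_dualMean_le {S : Set E} (hF : ConvexOn ℝ S F) {m z : E}
    (hgrad : HasGradientAt F (f' m) m) (hmS : m ∈ S) (hzS : z ∈ S)
    (hm : f' m = ∫ ω, f' (Y ω) ∂μ) (hY : Integrable (fun ω => f' (Y ω)) μ)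
    (hz : Integrable (fun ω => bregmanDiv F f' z (Y ω)) μ)
    (hm' : Integrable (fun ω => bregmanDiv F f' m (Y ω)) μ) :
    ∫ ω, bregmanDiv F f' m (Y ω) ∂μ ≤ ∫ ω, bregmanDiv F f' z (Y ω) ∂μ := by
  have := integral_bregmanDiv_sub_integral_bregmanDiv_of_dualMean hm hY hz hm'
  linarith [bregmanDiv_nonneg hF hmS hzS hgrad]

end Integral

/-- Off `S` nothing is known about `f'`, but on `S` it agrees with `gradient F`, which is Borel
measurable by `measurable_fderiv`. -/
theorem aestronglyMeasurable_bregmanDiv [MeasurableSpace E] [BorelSpace E]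
    [SecondCountableTopology E] {S : Set E} {F : E → ℝ} {f' : E → E} (hS : MeasurableSet S)
    (hgrad : ∀ x ∈ S, HasGradientAt F (f' x) x) {ν : Measure E} (hν : ∀ᵐ x ∂ν, x ∈ S) (y : E) :
    AEStronglyMeasurable (bregmanDiv F f' y) ν := by
  have hFcont : ContinuousOn F S := fun x hx =>
    (hgrad x hx).differentiableAt.continuousAt.continuousWithinAt
  have hFm : AEStronglyMeasurable F ν := by
    simpa [Measure.restrict_eq_self_of_ae_mem hν] using hFcont.aestronglyMeasurable (μ := ν) hS
  have hgm : AEStronglyMeasurable (gradient F) ν :=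
    ((InnerProductSpace.toDual ℝ E).symm.continuous.measurable.comp
      (measurable_fderiv ℝ F)).aestronglyMeasurable
  have hm : AEStronglyMeasurable (fun x => F y - F x - ⟪gradient F x, y - x⟫) ν :=
    (aestronglyMeasurable_const.sub hFm).sub
      (hgm.inner (aestronglyMeasurable_const.sub aestronglyMeasurable_id))
  refine hm.congr ?_
  filter_upwards [hν] with x hx
  simp [bregmanDiv, (hgrad x hx).gradient]

end Bregman

theorem primal_ensembling_reduces_variance_general {d : ℕ}
    (S : Set (EuclideanSpace ℝ (Fin d))) (hSc : IsClosed S)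
    (F : EuclideanSpace ℝ (Fin d) → ℝ)
    (f' : EuclideanSpace ℝ (Fin d) → EuclideanSpace ℝ (Fin d))
    (hF : StrictConvexOn ℝ S F)
    (hdiff : ∀ x ∈ S, HasGradientAt F (f' x) x)
    (D : EuclideanSpace ℝ (Fin d) → EuclideanSpace ℝ (Fin d) → ℝ)
    (hD : ∀ y x, D y x = F y - F x - ((inner ℝ (f' x) (y - x) : ℝ)))
    -- D is jointly convex in both arguments
    (hDjc : ConvexOn ℝ (S ×ˢ S) (fun p : EuclideanSpace ℝ (Fin d) × EuclideanSpace ℝ (Fin d) => D p.1 p.2))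
    {Ω : Type*} [MeasurableSpace Ω] (μ : Measure Ω) [IsProbabilityMeasure μ]
    (n : ℕ) (hn : 0 < n)
    (X : Ω → EuclideanSpace ℝ (Fin d)) (Xs : Fin n → Ω → EuclideanSpace ℝ (Fin d))
    (hXm : Measurable X)
    -- the Xᵢ are i.i.d. copies of X
    (hid : ∀ i, IdentDistrib (Xs i) X μ μ)
    (hXS : ∀ᵐ ω ∂μ, X ω ∈ S) (hXsS : ∀ i, ∀ᵐ ω ∂μ, Xs i ω ∈ S)
    -- the ensemble prediction
    (Xhat : Ω → EuclideanSpace ℝ (Fin d))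
    (hXhat : ∀ ω, Xhat ω = (n : ℝ)⁻¹ • ∑ i, Xs i ω)
    -- dual means
    (EX EXhat : EuclideanSpace ℝ (Fin d))
    (hmemX : EX ∈ S)
    (hrangeXhat : f' EXhat = ∫ ω, f' (Xhat ω) ∂μ) (hmemXhat : EXhat ∈ S)
    -- integrability
    (hdinth : Integrable (fun ω => f' (Xhat ω)) μ)
    (hintV : Integrable (fun ω => D EX (X ω)) μ)
    (hintVh : Integrable (fun ω => D EXhat (Xhat ω)) μ)
    (hintz : ∀ z ∈ S, Integrable (fun ω => D z (Xhat ω)) μ) :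
    ∫ ω, D EXhat (Xhat ω) ∂μ ≤ ∫ ω, D EX (X ω) ∂μ := by
  obtain rfl : D = bregmanDiv F f' := funext₂ hD
  obtain rfl : Xhat = fun ω => (n : ℝ)⁻¹ • ∑ i, Xs i ω := funext hXhat
  have : Nonempty (Fin n) := ⟨⟨0, hn⟩⟩
  have hconv : ConvexOn ℝ S (bregmanDiv F f' EX) := hDjc.comp_prodMk_left hmemX
  have hmeas : AEStronglyMeasurable (bregmanDiv F f' EX) (μ.map X) :=
    aestronglyMeasurable_bregmanDiv hSc.measurableSet hdiff
      ((ae_map_iff hXm.aemeasurable hSc.measurableSet).2 hXS) EX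
  calc ∫ ω, bregmanDiv F f' EXhat ((n : ℝ)⁻¹ • ∑ i, Xs i ω) ∂μ
      ≤ ∫ ω, bregmanDiv F f' EX ((n : ℝ)⁻¹ • ∑ i, Xs i ω) ∂μ :=
        integral_bregmanDiv_dualMean_le hF.convexOn (hdiff EXhat hmemXhat) hmemXhat hmemX
          hrangeXhat hdinth (hintz EX hmemX) hintVh
    _ ≤ ∫ ω, bregmanDiv F f' EX (X ω) ∂μ := by
        simpa using hconv.integral_comp_average_le_of_identDistrib hid hXsS hmeas hintV
          (by simpa using hintz EX hmemX)

/-- Primal ensembling reduces the Bregman variance for jointly convex divergences: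
if `D_F` is jointly convex and `X₁,…,Xₙ` are i.i.d. copies of `X`, then with
`X̂ = (1/n) ∑ᵢ Xᵢ`, one has `E D_F[ℰX̂ ‖ X̂] ≤ E D_F[ℰX ‖ X]`. -/
theorem primal_ensembling_reduces_variance {d : ℕ}
    (S : Set (EuclideanSpace ℝ (Fin d))) (hSc : IsClosed S) (hSv : Convex ℝ S)
    (F : EuclideanSpace ℝ (Fin d) → ℝ)
    (f' g : EuclideanSpace ℝ (Fin d) → EuclideanSpace ℝ (Fin d))
    (hF : StrictConvexOn ℝ S F)
    (hdiff : ∀ x ∈ S, HasGradientAt F (f' x) x)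
    (hg : ∀ x ∈ S, g (f' x) = x)
    (D : EuclideanSpace ℝ (Fin d) → EuclideanSpace ℝ (Fin d) → ℝ)
    (hD : ∀ y x, D y x = F y - F x - ((inner ℝ (f' x) (y - x) : ℝ)))
    -- D is jointly convex in both arguments
    (hDjc : ConvexOn ℝ (S ×ˢ S) (fun p : EuclideanSpace ℝ (Fin d) × EuclideanSpace ℝ (Fin d) => D p.1 p.2))
    {Ω : Type*} [MeasurableSpace Ω] (μ : Measure Ω) [IsProbabilityMeasure μ]
    (n : ℕ) (hn : 0 < n)
    (X : Ω → EuclideanSpace ℝ (Fin d)) (Xs : Fin n → Ω → EuclideanSpace ℝ (Fin d))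
    (hXm : Measurable X) (hXsm : ∀ i, Measurable (Xs i))
    -- the Xᵢ are i.i.d. copies of X
    (hiid : iIndepFun Xs μ)
    (hid : ∀ i, IdentDistrib (Xs i) X μ μ)
    (hXS : ∀ᵐ ω ∂μ, X ω ∈ S) (hXsS : ∀ i, ∀ᵐ ω ∂μ, Xs i ω ∈ S)
    -- the ensemble prediction
    (Xhat : Ω → EuclideanSpace ℝ (Fin d))
    (hXhat : ∀ ω, Xhat ω = (n : ℝ)⁻¹ • ∑ i, Xs i ω)
    -- dual means
    (EX EXhat : EuclideanSpace ℝ (Fin d))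
    (hEX : EX = g (∫ ω, f' (X ω) ∂μ)) (hEXhat : EXhat = g (∫ ω, f' (Xhat ω) ∂μ))
    (hrangeX : f' EX = ∫ ω, f' (X ω) ∂μ) (hmemX : EX ∈ S)
    (hrangeXhat : f' EXhat = ∫ ω, f' (Xhat ω) ∂μ) (hmemXhat : EXhat ∈ S)
    -- integrability
    (hdint : Integrable (fun ω => f' (X ω)) μ)
    (hdinth : Integrable (fun ω => f' (Xhat ω)) μ)
    (hintV : Integrable (fun ω => D EX (X ω)) μ)
    (hintVh : Integrable (fun ω => D EXhat (Xhat ω)) μ)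
    (hintz : ∀ z ∈ S, Integrable (fun ω => D z (Xhat ω)) μ) :
    ∫ ω, D EXhat (Xhat ω) ∂μ ≤ ∫ ω, D EX (X ω) ∂μ :=
  primal_ensembling_reduces_variance_general S hSc F f' hF hdiff D hD hDjc μ n hn X Xs hXm hid hXS
    hXsS Xhat hXhat EX EXhat hmemX hrangeXhat hmemXhat hdinth hintV hintVh hintz
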